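/- For any nonempty partition λ and any valid Nim move rem(λ) → p, there exists an RIT-move on an odd-numbered row λ → λ̄ such that core(λ̄) = core(λ) and rem(λ̄) = p. -/

import Mathlib

/-- The `j`-th part (0-indexed) of a partition given as a list, `0` beyond the end. -/
def part (l : List ℕ) (j : ℕ) : ℕ := l.getD j 0

/-- A partition: a nonincreasing list of positive integers. -/
def IsPartition (l : List ℕ) : Prop :=
  l.Chain' (· ≥ ·) ∧ ∀ x ∈ l, 0 < x

/-- RIT move: replace the part at (0-indexed) position `i` by a smaller value `v`,
keeping the sequence nonincreasing, then drop the (trailing) zeros. -/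
def RitMove (l l' : List ℕ) : Prop :=
  ∃ i v, i < l.length ∧ v < part l i ∧ (l.set i v).Chain' (· ≥ ·) ∧
    l' = (l.set i v).filter (fun x => x ≠ 0)

/-- RIT move on an odd-numbered row (1-indexed), i.e. an even 0-indexed position. -/
def RitMoveOdd (l l' : List ℕ) : Prop :=
  ∃ i v, i < l.length ∧ i % 2 = 0 ∧ v < part l i ∧ (l.set i v).Chain' (· ≥ ·) ∧
    l' = (l.set i v).filter (fun x => x ≠ 0)

/-- RIT move on an even-numbered row (1-indexed), i.e. an odd 0-indexed position. -/
def RitMoveEven (l l' : List ℕ) : Prop :=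
  ∃ i v, i < l.length ∧ i % 2 = 1 ∧ v < part l i ∧ (l.set i v).Chain' (· ≥ ·) ∧
    l' = (l.set i v).filter (fun x => x ≠ 0)

/-- `core λ = (λ₂, λ₂, λ₄, λ₄, …)` (1-indexed parts), as a `0`-padded sequence. -/
def core (l : List ℕ) : ℕ → ℕ := fun j => part l (2 * (j / 2) + 1)

/-- `rem λ = (λ₁ - λ₂, λ₃ - λ₄, …)` (1-indexed parts), as a `0`-padded sequence. -/
def rem (l : List ℕ) : ℕ → ℕ := fun i => part l (2 * i) - part l (2 * i + 1)

/-- A Nim move strictly decreases exactly one coordinate. -/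
def NimMove (p q : ℕ → ℕ) : Prop := ∃ i, q i < p i ∧ ∀ j, j ≠ i → q j = p j

/-- The nim-sum (bitwise XOR) of the remnant of `l`:
`(λ₁ - λ₂) ⊕ (λ₃ - λ₄) ⊕ ⋯ ⊕ (λ_{2⌈r/2⌉-1} - λ_{2⌈r/2⌉})`. -/
def nimSum (l : List ℕ) : ℕ :=
  (List.ofFn (fun i : Fin ((l.length + 1) / 2) => rem l i)).foldr (· ^^^ ·) 0

/-- The minimal excludant of a set of naturals. -/
noncomputable def mexOf (S : Set ℕ) : ℕ := sInf {n | n ∉ S}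

/-- `G` is the (normal play) Sprague-Grundy function of RIT. -/
def IsRitGrundy (G : List ℕ → ℕ) : Prop :=
  ∀ l, IsPartition l → G l = mexOf {n | ∃ l', RitMove l l' ∧ G l' = n}

/-- `G` is the misère Grundy function of RIT (value `1` at the terminal position). -/
def IsRitMisereGrundy (G : List ℕ → ℕ) : Prop :=
  G [] = 1 ∧ ∀ l, IsPartition l → l ≠ [] →
    G l = mexOf {n | ∃ l', RitMove l l' ∧ G l' = n}

/-- `G` is the misère Grundy function of Nim on `0`-padded sequences of heaps. -/
def IsNimMisereGrundy (G : (ℕ → ℕ) → ℕ) : Prop :=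
  (∀ p : ℕ → ℕ, (∀ i, p i = 0) → G p = 1) ∧
  (∀ p : ℕ → ℕ, (Function.support p).Finite → (∃ i, p i ≠ 0) →
    G p = mexOf {n | ∃ q, NimMove p q ∧ G q = n})

/-- `P` is the set of P-positions of RIT under normal play. -/
def IsRitP (P : List ℕ → Prop) : Prop :=
  ∀ l, IsPartition l → (P l ↔ ∀ l', RitMove l l' → ¬ P l')

/-! A Nim move lowering heap `i` of the remnant to `p i` is realized by lowering the odd row
`λ_{2i+1}` to `λ_{2i+2} + p i`. This value lies between `λ_{2i+2}` and `λ_{2i+1}`, so the parts stay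
nonincreasing, the even rows (hence the core) are untouched, and only the `i`-th remnant changes.
Dropping a trailing zero does not alter the `0`-padded sequences `core` and `rem`. -/

lemma part_eq_zero_of_length_le {l : List ℕ} {j : ℕ} (h : l.length ≤ j) : part l j = 0 :=
  List.getD_eq_default _ _ h

lemma part_eq_zero_of_forall_eq_zero {l : List ℕ} (h : ∀ x ∈ l, x = 0) (j : ℕ) :
    part l j = 0 := by
  rcases lt_or_ge j l.length with hj | hj
  · exact (List.getD_eq_getElem _ _ hj).trans (h _ (List.getElem_mem hj))
  · exact part_eq_zero_of_length_le hj

lemma isChain_iff_part_succ_le (l : List ℕ) :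
    l.IsChain (· ≥ ·) ↔ ∀ j, part l (j + 1) ≤ part l j := by
  rw [List.isChain_iff_getElem]
  constructor
  · intro h j
    rcases lt_or_ge (j + 1) l.length with hj | hj
    · rw [part, part, List.getD_eq_getElem _ _ hj, List.getD_eq_getElem _ _ (by omega)]
      exact h j hj
    · rw [part_eq_zero_of_length_le hj]
      exact Nat.zero_le _
  · intro h j hj
    have := h j
    rwa [part, part, List.getD_eq_getElem _ _ hj, List.getD_eq_getElem _ _ (by omega)] at this

lemma part_antitone {l : List ℕ} (h : l.IsChain (· ≥ ·)) : Antitone (part l) :=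
  antitone_nat_of_succ_le ((isChain_iff_part_succ_le l).1 h)

lemma part_set {l : List ℕ} {k : ℕ} (hk : k < l.length) (v : ℕ) :
    part (l.set k v) = Function.update (part l) k v := by
  funext j
  rw [Function.update_apply]
  split_ifs with hj
  · simp [part, hj, hk]
  · simp [part, List.getD_eq_getElem?_getD, List.getElem?_set_ne (Ne.symm hj)]

lemma isChain_set {l : List ℕ} (h : l.IsChain (· ≥ ·)) {k v : ℕ} (hk : k < l.length)
    (hlo : part l (k + 1) ≤ v) (hhi : v ≤ part l k) : (l.set k v).IsChain (· ≥ ·) := by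
  rw [isChain_iff_part_succ_le, part_set hk]
  intro j
  simp only [Function.update_apply]
  rcases eq_or_ne j k with rfl | hjk
  · rwa [if_neg (by omega), if_pos rfl]
  · rw [if_neg hjk]
    split_ifs with hj
    · exact hhi.trans (part_antitone h (by omega))
    · exact part_antitone h (Nat.le_succ j)

lemma part_filter_ne_zero {l : List ℕ} (h : l.IsChain (· ≥ ·)) :
    part (l.filter (· ≠ 0)) = part l := by
  induction l with
  | nil => rfl
  | cons a t ih =>
    by_cases ha : a = 0
    · subst ha
      have hzero : ∀ x ∈ (0 :: t), x = 0 := by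
        have := List.pairwise_cons.mp (List.isChain_iff_pairwise.mp h)
        simpa using fun x hx => Nat.le_zero.mp (this.1 x hx)
      rw [List.filter_eq_nil_iff.mpr (by simpa using hzero)]
      funext j
      exact (part_eq_zero_of_forall_eq_zero hzero j).symm
    · rw [List.filter_cons_of_pos (by simpa using ha)]
      funext j
      cases j with
      | zero => rfl
      | succ j => exact congrFun (ih h.tail) j

lemma core_filter_ne_zero {l : List ℕ} (h : l.IsChain (· ≥ ·)) :
    core (l.filter (· ≠ 0)) = core l := by
  unfold core
  rw [part_filter_ne_zero h]

lemma rem_filter_ne_zero {l : List ℕ} (h : l.IsChain (· ≥ ·)) :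
    rem (l.filter (· ≠ 0)) = rem l := by
  unfold rem
  rw [part_filter_ne_zero h]

lemma core_set_even {l : List ℕ} {i : ℕ} (hi : 2 * i < l.length) (v : ℕ) :
    core (l.set (2 * i) v) = core l := by
  funext j
  simp only [core, part_set hi, Function.update_apply]
  rw [if_neg (by omega)]

lemma rem_set_even {l : List ℕ} {i : ℕ} (hi : 2 * i < l.length) (v : ℕ) :
    rem (l.set (2 * i) v) = Function.update (rem l) i (v - part l (2 * i + 1)) := by
  funext j
  simp only [rem, part_set hi, Function.update_apply, if_neg (show 2 * j + 1 ≠ 2 * i by omega)]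
  by_cases hj : j = i
  · simp [hj]
  · rw [if_neg (by omega), if_neg hj]

theorem stmt_2_general (l : List ℕ) (hl : IsPartition l) (p : ℕ → ℕ)
    (h : NimMove (rem l) p) :
    ∃ l', RitMoveOdd l l' ∧ core l' = core l ∧ rem l' = p := by
  obtain ⟨i, hlt, heq⟩ := h
  have hgap : part l (2 * i + 1) + p i < part l (2 * i) := by
    unfold rem at hlt
    omega
  have hi : 2 * i < l.length := by
    by_contra! hi
    rw [part_eq_zero_of_length_le hi] at hgap
    omega
  have hchain := isChain_set hl.1 hi (Nat.le_add_right _ _) hgap.le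
  refine ⟨_, ⟨2 * i, _, hi, by omega, hgap, hchain, rfl⟩, ?_, ?_⟩
  · rw [core_filter_ne_zero hchain, core_set_even hi]
  · rw [rem_filter_ne_zero hchain, rem_set_even hi, Nat.add_sub_cancel_left]
    exact Function.update_eq_iff.2 ⟨rfl, fun j hj => (heq j hj).symm⟩

/-- every Nim move on the remnant is realized by an odd-row RIT move
preserving the core. -/
theorem stmt_2 (l : List ℕ) (hl : IsPartition l) (hne : l ≠ []) (p : ℕ → ℕ)
    (h : NimMove (rem l) p) :
    ∃ l', RitMoveOdd l l' ∧ core l' = core l ∧ rem l' = p :=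
  stmt_2_general l hl p h
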